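/- The occurrence substitution axiom is sound: in any model, if def_w(p) = def_w(Q) for an atom p and def_w(R) = def_w(S), then def_w(R) = def_w(S') where S' is obtained from S by replacing one specified occurrence of p in S by Q. -/
import Mathlib


inductive BForm (α : Type) : Type where
  | atom : α → BForm α
  | neg : BForm α → BForm α
  | conj : BForm α → BForm α → BForm α
  deriving DecidableEq

def defw {α : Type} (DEF : α → BForm α) : BForm α → BForm α
  | .atom p => DEF p
  | .neg P => .neg (defw DEF P)
  | .conj P Q => .conj (defw DEF P) (defw DEF Q)

inductive Dir : Type where
  | d : Dir
  | l : Dir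
  | r : Dir
  deriving DecidableEq

/-- The subformula of a boolean formula at a given position (path into the syntax tree). -/
def getAt {α : Type} : List Dir → BForm α → Option (BForm α)
  | [], P => some P
  | .d :: π, .neg P => getAt π P
  | .l :: π, .conj P _ => getAt π P
  | .r :: π, .conj _ Q => getAt π Q
  | _, _ => none

/-- Replace the subformula at a given position by `Q`. -/
def putAt {α : Type} (Q : BForm α) : List Dir → BForm α → Option (BForm α)
  | [], _ => some Q
  | .d :: π, .neg P => (putAt Q π P).map .neg
  | .l :: π, .conj P S => (putAt Q π P).map (fun P' => .conj P' S)
  | .r :: π, .conj P S => (putAt Q π S).map (fun S' => .conj P S')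
  | _, _ => none


theorem putAt_defw_eq {α : Type} (DEF : α → BForm α) (p : α) (Q : BForm α) :
    ∀ (π : List Dir) (S S' : BForm α),
    getAt π S = some (.atom p) → putAt Q π S = some S' →
    defw DEF (.atom p) = defw DEF Q → defw DEF S = defw DEF S'
  | [], S, S', hocc, hsub, hpQ => by
      simp [getAt] at hocc; simp [putAt] at hsub; subst hocc; subst hsub; exact hpQ
  | Dir.d :: π, .neg P, S', hocc, hsub, hpQ => by
      simp [getAt] at hocc
      simp [putAt, Option.map_eq_some_iff] at hsub
      obtain ⟨P', h1, h2⟩ := hsub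
      subst h2
      simp [defw]
      exact putAt_defw_eq DEF p Q π P P' hocc h1 hpQ
  | Dir.l :: π, .conj P T, S', hocc, hsub, hpQ => by
      simp [getAt] at hocc
      simp [putAt, Option.map_eq_some_iff] at hsub
      obtain ⟨P', h1, h2⟩ := hsub
      subst h2
      simp [defw]
      exact putAt_defw_eq DEF p Q π P P' hocc h1 hpQ
  | Dir.r :: π, .conj P T, S', hocc, hsub, hpQ => by
      simp [getAt] at hocc
      simp [putAt, Option.map_eq_some_iff] at hsub
      obtain ⟨T', h1, h2⟩ := hsub
      subst h2
      simp [defw]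
      exact putAt_defw_eq DEF p Q π T T' hocc h1 hpQ

theorem occurrence_substitution_sound {α : Type} (DEF : α → BForm α)
    (p : α) (Q R S S' : BForm α) (π : List Dir)
    (hocc : getAt π S = some (.atom p))
    (hsub : putAt Q π S = some S')
    (hpQ : defw DEF (.atom p) = defw DEF Q)
    (hRS : defw DEF R = defw DEF S) :
    defw DEF R = defw DEF S' := by
  exact hRS.trans (putAt_defw_eq DEF p Q π S S' hocc hsub hpQ)
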